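/- Let p be a prime, A an m×n matrix over ℤ/p and b ∈ (ℤ/p)^m. There exists a unital *-algebra homomorphism φ : 𝒜(Iso(G_{A,b}, G_{A,0})) → 𝒜(syncLCS(A,b)) such that for every vertex (i,x) of G_{A,b} and every vertex (j,y) of G_{A,0}, the generator corresponding to input (i,x) and output (j,y) (equivalently, input (j,y) and output (i,x)) is sent to a_{i,x+y} if i = j and to 0 if i ≠ j, and every generator whose input and output lie in the same graph is sent to 0. -/

import Mathlib

/-!
The homomorphism sends `e_{(i,x),(k,y)}` to `δ_{ik} a_{i,x+y}`. Translation by `x ∈ S_i(A,b)` is a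
bijection `S_i(A,0) → S_i(A,b)`, which gives the sum-to-one relations. If `a_{i,x+x'}` and
`a_{k,y+y'}` are not orthogonal, then `x + x'` and `y + y'` agree on `V_i ∩ V_k`, so `x, y` disagree
there iff `x', y'` do. Since vertices of the same row are equal iff they are not adjacent,
`(i,x), (k,y)` are adjacent, resp. equal, in `G_{A,b}` iff `(i,x'), (k,y')` are in `G_{A,0}`,
which is exactly what the orthogonality relations of the isomorphism game require.
-/

set_option maxHeartbeats 1000000
noncomputable section

/-! ### The conjugate-linear star structure on a monoid algebra `ℂ[M]`,
where `M` is a monoid with an (anti-multiplicative) star operation.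
For a group `G` (with `star = ⁻¹`, see below) this is the usual star structure
`(λ·g)* = conj(λ)·g⁻¹` on the group `*`-algebra `ℂG`. -/

section MonoidAlgebraStar

variable {M : Type*} [Monoid M] [StarMul M]

/-- the star operation on `ℂ[M]`: `(λ·m)* = conj(λ)·(star m)` -/
noncomputable def mstar (f : MonoidAlgebra ℂ M) : MonoidAlgebra ℂ M :=
  Finsupp.equivMapDomain ⟨star, star, star_involutive, star_involutive⟩
    (Finsupp.mapRange (starRingEnd ℂ) (map_zero _) f.coeff) |> MonoidAlgebra.ofCoeff

lemma mstar_apply (f : MonoidAlgebra ℂ M) (x : M) :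
    (mstar f).coeff x = starRingEnd ℂ (f.coeff (star x)) := rfl

lemma mstar_single (a : M) (c : ℂ) :
    mstar (MonoidAlgebra.single a c) = MonoidAlgebra.single (star a) (starRingEnd ℂ c) := by
  classical
  ext x
  show starRingEnd ℂ ((Finsupp.single a c) (star x)) =
    (Finsupp.single (star a) (starRingEnd ℂ c)) x
  simp only [Finsupp.single_apply]
  by_cases h : a = star x
  · rw [if_pos h, if_pos (by rw [h, star_star])]
  · rw [if_neg h, if_neg (fun h2 => h (by rw [← h2, star_star])), map_zero]

lemma mstar_add (f g : MonoidAlgebra ℂ M) : mstar (f + g) = mstar f + mstar g := by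
  ext x
  exact map_add (starRingEnd ℂ) (f.coeff (star x)) (g.coeff (star x))

lemma mstar_zero : mstar (0 : MonoidAlgebra ℂ M) = 0 := by
  ext x
  exact map_zero (starRingEnd ℂ)

lemma mstar_mul (f g : MonoidAlgebra ℂ M) : mstar (f * g) = mstar g * mstar f := by
  induction f using MonoidAlgebra.induction_linear with
  | zero =>
      exact (congrArg mstar (zero_mul g)).trans (mstar_zero.trans
        ((mul_zero (mstar g)).symm.trans (congrArg _ mstar_zero.symm)))
  | add f1 f2 h1 h2 =>
      refine Eq.trans (congrArg mstar (@add_mul (MonoidAlgebra ℂ M) _ _ _ f1 f2 g)) ?_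
      rw [mstar_add, h1, h2, ← mul_add]
      exact congrArg (mstar g * ·) (mstar_add f1 f2).symm
  | single a c =>
    induction g using MonoidAlgebra.induction_linear with
    | zero =>
        exact (congrArg mstar (mul_zero _)).trans (mstar_zero.trans
          ((zero_mul _).symm.trans (congrArg (· * _) mstar_zero.symm)))
    | add g1 g2 h1 h2 =>
        refine Eq.trans (congrArg mstar (@mul_add (MonoidAlgebra ℂ M) _ _ _ _ g1 g2)) ?_
        rw [mstar_add, h1, h2, ← add_mul]
        exact congrArg (· * mstar (MonoidAlgebra.single a c)) (mstar_add g1 g2).symm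
    | single b d =>
      show mstar ((MonoidAlgebra.single a c) * (MonoidAlgebra.single b d)) =
        mstar (MonoidAlgebra.single b d) * mstar (MonoidAlgebra.single a c)
      rw [MonoidAlgebra.single_mul_single, mstar_single, mstar_single, mstar_single,
        MonoidAlgebra.single_mul_single, star_mul, map_mul, mul_comm (starRingEnd ℂ d)]

/-- the `*`-ring structure of `ℂ[M]` -/
noncomputable instance instMAStar : StarRing (MonoidAlgebra ℂ M) where
  star := mstar
  star_involutive f := by
    ext x
    calc (mstar (mstar f)).coeff x = starRingEnd ℂ (starRingEnd ℂ (f.coeff (star (star x)))) := rfl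
      _ = f.coeff (star (star x)) := Complex.conj_conj _
      _ = f.coeff x := congrArg (fun y => f.coeff y) (star_star x)
  star_mul := mstar_mul
  star_add := mstar_add

lemma star_of' (a : M) :
    star (MonoidAlgebra.of ℂ M a) = MonoidAlgebra.of ℂ M (star a) := by
  show mstar _ = _
  rw [show (MonoidAlgebra.of ℂ M a : MonoidAlgebra ℂ M) = MonoidAlgebra.single a 1 from rfl,
    mstar_single, map_one]
  rfl

end MonoidAlgebraStar

section LinearSystem

variable {p m n : ℕ}

/-- `V_i`, the support of the `i`-th row of `A` -/
def Vset (A : Matrix (Fin m) (Fin n) (ZMod p)) (i : Fin m) : Finset (Fin n) :=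
  Finset.univ.filter fun j => A i j ≠ 0

/-- `S_i(A,b)`: solutions of the `i`-th equation supported inside `V_i` -/
def Ssol [NeZero p] (A : Matrix (Fin m) (Fin n) (ZMod p)) (b : Fin m → ZMod p) (i : Fin m) :
    Finset (Fin n → ZMod p) :=
  Finset.univ.filter fun x => (∑ j, A i j * x j) = b i ∧ ∀ j, x j ≠ 0 → j ∈ Vset A i

/-- `(x,y)` are incompatible solutions for rows `(i,k)` -/
def Incompat (A : Matrix (Fin m) (Fin n) (ZMod p)) (i k : Fin m)
    (x y : Fin n → ZMod p) : Prop :=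
  ∃ j ∈ Vset A i ∩ Vset A k, x j ≠ y j

lemma Incompat.symm {A : Matrix (Fin m) (Fin n) (ZMod p)} {i k : Fin m}
    {x y : Fin n → ZMod p} (h : Incompat A i k x y) : Incompat A k i y x := by
  obtain ⟨j, hj, hne⟩ := h
  exact ⟨j, by simpa [Finset.mem_inter, and_comm] using hj, hne.symm⟩

end LinearSystem

section GameAlgebra

variable {p m n : ℕ}

/-- the index set of the generators `a_{i,x}` of the game algebra: pairs `(i, x)` with
`x ∈ S_i(A,b)` -/
abbrev SyncGen [NeZero p] (A : Matrix (Fin m) (Fin n) (ZMod p)) (b : Fin m → ZMod p) : Type _ :=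
  Σ i : Fin m, {x : Fin n → ZMod p // x ∈ Ssol A b i}

/-- the free unital complex `*`-algebra on a set `X` of self-adjoint generators -/
abbrev FreeStarAlg (X : Type*) := MonoidAlgebra ℂ (FreeMonoid X)

/-- a generator of the free `*`-algebra -/
noncomputable def Xg {X : Type*} (x : X) : FreeStarAlg X :=
  MonoidAlgebra.of ℂ (FreeMonoid X) (FreeMonoid.of x)

lemma starX {X : Type*} (x : X) : star (Xg x) = Xg x := by
  rw [Xg, star_of', FreeMonoid.star_of]

/-- the defining relations of the game algebra `𝒜(syncLCS(A,b))`: the generators are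
self-adjoint (automatic here) idempotents, for each row the generators sum to one, and
incompatible pairs are orthogonal. -/
inductive SyncRel [NeZero p] (A : Matrix (Fin m) (Fin n) (ZMod p)) (b : Fin m → ZMod p) :
    FreeStarAlg (SyncGen A b) → FreeStarAlg (SyncGen A b) → Prop
  | idem (g : SyncGen A b) : SyncRel A b (Xg g * Xg g) (Xg g)
  | sum_one (i : Fin m) :
      SyncRel A b (∑ x ∈ (Ssol A b i).attach, Xg (⟨i, x⟩ : SyncGen A b)) 1
  | orth {i k : Fin m} (x : {x // x ∈ Ssol A b i}) (y : {y // y ∈ Ssol A b k})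
      (h : Incompat A i k x.1 y.1) :
      SyncRel A b (Xg (⟨i, x⟩ : SyncGen A b) * Xg (⟨k, y⟩ : SyncGen A b)) 0

lemma SyncRel.star_closed [NeZero p] (A : Matrix (Fin m) (Fin n) (ZMod p)) (b : Fin m → ZMod p) :
    ∀ a c, SyncRel A b a c → SyncRel A b (star a) (star c) := by
  intro a c h
  cases h with
  | idem g => rw [star_mul, starX]; exact SyncRel.idem g
  | sum_one i =>
      rw [star_sum, star_one]
      simp only [starX]
      exact SyncRel.sum_one i
  | orth x y h =>
      rw [star_mul, starX, starX, star_zero]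
      exact SyncRel.orth y x h.symm

/-- The game algebra `𝒜(syncLCS(A,b))`: the quotient of the free `*`-algebra on the
generators `a_{i,x}` by the `*`-ideal generated by the game relations. -/
abbrev GameAlg [NeZero p] (A : Matrix (Fin m) (Fin n) (ZMod p)) (b : Fin m → ZMod p) :=
  RingQuot (SyncRel A b)

noncomputable instance [NeZero p] (A : Matrix (Fin m) (Fin n) (ZMod p)) (b : Fin m → ZMod p) :
    StarRing (GameAlg A b) :=
  RingQuot.starRing _ (SyncRel.star_closed A b)

/-- the generator `a_{i,x}` of the game algebra `𝒜(syncLCS(A,b))` -/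
noncomputable def agen [NeZero p] (A : Matrix (Fin m) (Fin n) (ZMod p)) (b : Fin m → ZMod p)
    (i : Fin m) (x : Fin n → ZMod p) (hx : x ∈ Ssol A b i) : GameAlg A b :=
  RingQuot.mkAlgHom ℂ (SyncRel A b) (Xg ⟨i, ⟨x, hx⟩⟩)

end GameAlgebra

section IsoGame

variable {p m n : ℕ}

/-- the graph `G_{A,b}`: vertices are pairs `(i,x)` with `x ∈ S_i(A,b)`, and two vertices
are adjacent iff they are incompatible solutions -/
def lsGraph [NeZero p] (A : Matrix (Fin m) (Fin n) (ZMod p)) (b : Fin m → ZMod p) :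
    SimpleGraph (SyncGen A b) where
  Adj v w := Incompat A v.1 w.1 v.2.1 w.2.1
  symm := ⟨fun _ _ h => h.symm⟩
  loopless := ⟨fun v h => by obtain ⟨j, _, hne⟩ := h; exact hne rfl⟩

/-- the rule predicate of the graph isomorphism game `Iso(G,H)`:
`IsoWin G H v w x y` holds iff on inputs `(v,w)` the answers `(x,y)` win, i.e.
`v,x` are in different graphs, `w,y` are in different graphs, and if `v,w` are in the
same graph then their relationship (equal / adjacent / distinct non-adjacent) is
satisfied by `x,y` as well. -/
def IsoWin {VG VH : Type*} (G : SimpleGraph VG) (H : SimpleGraph VH) :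
    VG ⊕ VH → VG ⊕ VH → VG ⊕ VH → VG ⊕ VH → Prop
  | Sum.inl v, Sum.inl w, Sum.inr x, Sum.inr y => (v = w ↔ x = y) ∧ (G.Adj v w ↔ H.Adj x y)
  | Sum.inl _, Sum.inr _, Sum.inr _, Sum.inl _ => True
  | Sum.inr _, Sum.inl _, Sum.inl _, Sum.inr _ => True
  | Sum.inr v, Sum.inr w, Sum.inl x, Sum.inl y => (v = w ↔ x = y) ∧ (H.Adj v w ↔ G.Adj x y)
  | _, _, _, _ => False

/-- the defining relations of the game algebra `𝒜(Iso(G,H))`: the generators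
`e_{v,x}` (for an input `v` and an output `x`) are self-adjoint (automatic here)
idempotents, for every input the generators sum to one over all outputs, and losing
pairs are orthogonal (the relation set is closed under `*`). -/
inductive IsoRel {VG VH : Type*} [Fintype VG] [Fintype VH]
    (G : SimpleGraph VG) (H : SimpleGraph VH) :
    FreeStarAlg ((VG ⊕ VH) × (VG ⊕ VH)) → FreeStarAlg ((VG ⊕ VH) × (VG ⊕ VH)) → Prop
  | idem (g : (VG ⊕ VH) × (VG ⊕ VH)) : IsoRel G H (Xg g * Xg g) (Xg g)
  | sum_one (v : VG ⊕ VH) : IsoRel G H (∑ x : VG ⊕ VH, Xg (v, x)) 1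
  | orth {v w x y : VG ⊕ VH} (h : ¬ IsoWin G H v w x y) :
      IsoRel G H (Xg (v, x) * Xg (w, y)) 0
  | orth' {v w x y : VG ⊕ VH} (h : ¬ IsoWin G H v w x y) :
      IsoRel G H (Xg (w, y) * Xg (v, x)) 0

lemma IsoRel.star_closed {VG VH : Type*} [Fintype VG] [Fintype VH]
    (G : SimpleGraph VG) (H : SimpleGraph VH) :
    ∀ a c, IsoRel G H a c → IsoRel G H (star a) (star c) := by
  intro a c h
  cases h with
  | idem g => rw [star_mul, starX]; exact IsoRel.idem g
  | sum_one v =>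
      rw [star_sum, star_one]
      simp only [starX]
      exact IsoRel.sum_one v
  | orth h => rw [star_mul, starX, starX, star_zero]; exact IsoRel.orth' h
  | orth' h => rw [star_mul, starX, starX, star_zero]; exact IsoRel.orth h

/-- The game algebra `𝒜(Iso(G,H))` of the graph isomorphism game. -/
abbrev IsoAlg {VG VH : Type*} [Fintype VG] [Fintype VH]
    (G : SimpleGraph VG) (H : SimpleGraph VH) :=
  RingQuot (IsoRel G H)

noncomputable instance {VG VH : Type*} [Fintype VG] [Fintype VH]
    (G : SimpleGraph VG) (H : SimpleGraph VH) : StarRing (IsoAlg G H) :=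
  RingQuot.starRing _ (IsoRel.star_closed G H)

/-- the generator `e_{v,x}` of `𝒜(Iso(G,H))` for input `v` and output `x` -/
noncomputable def egen {VG VH : Type*} [Fintype VG] [Fintype VH]
    (G : SimpleGraph VG) (H : SimpleGraph VH) (v x : VG ⊕ VH) : IsoAlg G H :=
  RingQuot.mkAlgHom ℂ (IsoRel G H) (Xg (v, x))

/-- `(i, 0)` is a vertex of `G_{A,0}` -/
lemma zero_mem_Ssol [NeZero p] (A : Matrix (Fin m) (Fin n) (ZMod p)) (k : Fin m) :
    (0 : Fin n → ZMod p) ∈ Ssol A (0 : Fin m → ZMod p) k := by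
  simp [Ssol]

end IsoGame

section FreeStarAlgebra

instance {M : Type*} [Monoid M] [StarMul M] : StarModule ℂ (MonoidAlgebra ℂ M) where
  star_smul c f := by
    ext x
    exact map_mul (starRingEnd ℂ) c (f.coeff (star x))

lemma FreeMonoid.star_lift_of_isSelfAdjoint {X B : Type*} [Monoid B] [StarMul B] {f : X → B}
    (hf : ∀ x, IsSelfAdjoint (f x)) (l : FreeMonoid X) :
    star (FreeMonoid.lift f l) = FreeMonoid.lift f (star l) := by
  induction l using FreeMonoid.inductionOn' with
  | one => simp
  | of_mul x l ih =>
    rw [map_mul, star_mul, ih, FreeMonoid.lift_eval_of, (hf x).star_eq, star_mul,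
      FreeMonoid.star_of, map_mul, FreeMonoid.lift_eval_of]

variable {X B : Type*} [Semiring B] [StarRing B] [Algebra ℂ B] [StarModule ℂ B]

def FreeStarAlg.lift (f : X → B) (hf : ∀ x, IsSelfAdjoint (f x)) : FreeStarAlg X →⋆ₐ[ℂ] B :=
  { MonoidAlgebra.lift ℂ B (FreeMonoid X) (FreeMonoid.lift f) with
    map_star' := fun a => by
      induction a using MonoidAlgebra.induction_linear with
      | zero => simp
      | add a a' ha ha' => simp_all [star_add]
      | single l c =>
        change MonoidAlgebra.lift ℂ B _ _ (mstar _) = _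
        simp [mstar_single, MonoidAlgebra.lift_single, star_smul,
          FreeMonoid.star_lift_of_isSelfAdjoint hf] }

lemma FreeStarAlg.lift_Xg (f : X → B) (hf : ∀ x, IsSelfAdjoint (f x)) (x : X) :
    FreeStarAlg.lift f hf (Xg x) = f x := by
  simp [FreeStarAlg.lift, Xg]

end FreeStarAlgebra

section IsoGameAlgebra

variable {VG VH B : Type*} [Fintype VG] [Fintype VH] {G : SimpleGraph VG} {H : SimpleGraph VH}
  [Semiring B] [StarRing B] [Algebra ℂ B] [StarModule ℂ B]

lemma IsoAlg.star_mkAlgHom (a : FreeStarAlg ((VG ⊕ VH) × (VG ⊕ VH))) :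
    star (RingQuot.mkAlgHom ℂ (IsoRel G H) a) = RingQuot.mkAlgHom ℂ (IsoRel G H) (star a) := by
  simp only [RingQuot.mkAlgHom_def, RingQuot.mkRingHom_def, AlgHom.coe_mk, RingHom.coe_mk,
    MonoidHom.coe_mk, OneHom.coe_mk]
  rfl

/-- The relations `orth'` follow from `horth` by taking adjoints. -/
def IsoAlg.lift (f : (VG ⊕ VH) × (VG ⊕ VH) → B) (hsa : ∀ g, IsSelfAdjoint (f g))
    (hidem : ∀ g, f g * f g = f g) (hsum : ∀ v, ∑ x, f (v, x) = 1)
    (horth : ∀ {v w x y}, ¬ IsoWin G H v w x y → f (v, x) * f (w, y) = 0) :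
    IsoAlg G H →⋆ₐ[ℂ] B :=
  { RingQuot.liftAlgHom ℂ ⟨(FreeStarAlg.lift f hsa).toAlgHom, fun a c h => by
      cases h with
      | idem g => simpa [FreeStarAlg.lift_Xg] using hidem g
      | sum_one v => simpa [FreeStarAlg.lift_Xg] using hsum v
      | orth h => simpa [FreeStarAlg.lift_Xg] using horth h
      | orth' h =>
        simpa [FreeStarAlg.lift_Xg, (hsa _).star_eq] using congrArg star (horth h)⟩ with
    map_star' := fun a => by
      obtain ⟨a, rfl⟩ := RingQuot.mkAlgHom_surjective ℂ _ a
      simp [IsoAlg.star_mkAlgHom, map_star] }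

lemma IsoAlg.lift_egen (f : (VG ⊕ VH) × (VG ⊕ VH) → B) (hsa hidem hsum horth) (v x : VG ⊕ VH) :
    IsoAlg.lift f hsa hidem hsum horth (egen G H v x) = f (v, x) := by
  simp [IsoAlg.lift, egen, FreeStarAlg.lift_Xg]

end IsoGameAlgebra

section LinearSystemSolutions

variable {p m n : ℕ} {A : Matrix (Fin m) (Fin n) (ZMod p)} {b c : Fin m → ZMod p}
  {i k : Fin m} {x y : Fin n → ZMod p}

lemma Incompat.iff_of_not_incompat_add {x' y' : Fin n → ZMod p}
    (h : ¬ Incompat A i k (x + x') (y + y')) :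
    Incompat A i k x y ↔ Incompat A i k x' y' := by
  simp only [Incompat, not_exists, not_and, not_not] at h ⊢
  refine exists_congr fun j => and_congr_right fun hj => not_congr ?_
  have hsum : x j + x' j = y j + y' j := h j hj
  exact ⟨fun hxy => add_left_cancel (hxy ▸ hsum), fun hxy => add_right_cancel (hxy ▸ hsum)⟩

variable [NeZero p]

lemma mem_Ssol_iff :
    x ∈ Ssol A b i ↔ ∑ j, A i j * x j = b i ∧ ∀ j, A i j = 0 → x j = 0 := by
  simp only [Ssol, Vset, Finset.mem_filter, Finset.mem_univ, true_and, ne_eq]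
  exact and_congr_right fun _ => forall_congr' fun j => not_imp_not

lemma add_mem_Ssol (hx : x ∈ Ssol A b i) (hy : y ∈ Ssol A c i) : x + y ∈ Ssol A (b + c) i := by
  rw [mem_Ssol_iff] at hx hy ⊢
  refine ⟨?_, fun j hj => ?_⟩
  · simp [mul_add, Finset.sum_add_distrib, hx.1, hy.1]
  · simp [hx.2 j hj, hy.2 j hj]

lemma sub_mem_Ssol (hx : x ∈ Ssol A b i) (hy : y ∈ Ssol A c i) : x - y ∈ Ssol A (b - c) i := by
  rw [mem_Ssol_iff] at hx hy ⊢
  refine ⟨?_, fun j hj => ?_⟩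
  · simp [mul_sub, Finset.sum_sub_distrib, hx.1, hy.1]
  · simp [hx.2 j hj, hy.2 j hj]

lemma image_add_left_Ssol (hx : x ∈ Ssol A b i) :
    (Ssol A c i).image (x + ·) = Ssol A (b + c) i := by
  ext z
  simp only [Finset.mem_image]
  refine ⟨fun ⟨y, hy, hz⟩ => hz ▸ add_mem_Ssol hx hy, fun hz => ⟨z - x, ?_, add_sub_cancel x z⟩⟩
  simpa using sub_mem_Ssol hz hx

lemma SyncGen.eq_iff {v w : SyncGen A b} : v = w ↔ v.1 = w.1 ∧ ¬ (lsGraph A b).Adj v w := by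
  refine ⟨fun h => h ▸ ⟨rfl, (lsGraph A b).irrefl⟩, ?_⟩
  obtain ⟨i, x, hx⟩ := v
  obtain ⟨k, y, hy⟩ := w
  rintro ⟨rfl, hxy⟩
  simp only [lsGraph, Incompat, Vset, Finset.inter_self, Finset.mem_filter, Finset.mem_univ,
    true_and, not_exists, not_and, not_not] at hxy
  have hxy : x = y := funext fun j => by
    by_cases hj : A i j = 0
    · rw [(mem_Ssol_iff.1 hx).2 j hj, (mem_Ssol_iff.1 hy).2 j hj]
    · exact hxy j hj
  subst hxy
  rfl

end LinearSystemSolutions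

section GameAlgebraGenerators

variable {p m n : ℕ} [NeZero p] (A : Matrix (Fin m) (Fin n) (ZMod p)) (b : Fin m → ZMod p)

lemma GameAlg.star_mkAlgHom (a : FreeStarAlg (SyncGen A b)) :
    star (RingQuot.mkAlgHom ℂ (SyncRel A b) a) = RingQuot.mkAlgHom ℂ (SyncRel A b) (star a) := by
  simp only [RingQuot.mkAlgHom_def, RingQuot.mkRingHom_def, AlgHom.coe_mk, RingHom.coe_mk,
    MonoidHom.coe_mk, OneHom.coe_mk]
  rfl

/-- Extending `a_{i,z}` by `0` to all `z` spares membership proofs for the sums `x + y`. -/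
def agenExt (i : Fin m) (z : Fin n → ZMod p) : GameAlg A b :=
  if hz : z ∈ Ssol A b i then agen A b i z hz else 0

variable {A b}

lemma agenExt_of_mem {i : Fin m} {z : Fin n → ZMod p} (hz : z ∈ Ssol A b i) :
    agenExt A b i z = agen A b i z hz :=
  dif_pos hz

lemma isSelfAdjoint_agenExt (i : Fin m) (z : Fin n → ZMod p) :
    IsSelfAdjoint (agenExt A b i z) := by
  unfold agenExt
  split_ifs
  · rw [IsSelfAdjoint, agen, GameAlg.star_mkAlgHom, starX]
  · exact .zero _

lemma agenExt_mul_self (i : Fin m) (z : Fin n → ZMod p) :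
    agenExt A b i z * agenExt A b i z = agenExt A b i z := by
  unfold agenExt
  split_ifs
  · rw [agen, ← map_mul]
    exact RingQuot.mkAlgHom_rel ℂ (SyncRel.idem _)
  · exact mul_zero 0

lemma agenExt_mul_agenExt_of_incompat {i k : Fin m} {z w : Fin n → ZMod p}
    (h : Incompat A i k z w) : agenExt A b i z * agenExt A b k w = 0 := by
  unfold agenExt
  split_ifs with hz hw
  · rw [agen, agen, ← map_mul, ← map_zero (RingQuot.mkAlgHom ℂ (SyncRel A b))]
    exact RingQuot.mkAlgHom_rel ℂ (SyncRel.orth ⟨z, hz⟩ ⟨w, hw⟩ h)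
  all_goals simp

lemma sum_agenExt (i : Fin m) : ∑ z ∈ Ssol A b i, agenExt A b i z = 1 := by
  rw [← Finset.sum_attach, ← map_one (RingQuot.mkAlgHom ℂ (SyncRel A b)),
    ← RingQuot.mkAlgHom_rel ℂ (SyncRel.sum_one i), map_sum]
  exact Finset.sum_congr rfl fun z _ => agenExt_of_mem z.2

lemma sum_agenExt_add_left {i : Fin m} {x : Fin n → ZMod p} (hx : x ∈ Ssol A b i) :
    ∑ y ∈ Ssol A 0 i, agenExt A b i (x + y) = 1 := by
  rw [← Finset.sum_image fun _ _ _ _ h => add_left_cancel h, image_add_left_Ssol hx, add_zero,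
    sum_agenExt]

lemma sum_agenExt_add_right {i : Fin m} {y : Fin n → ZMod p} (hy : y ∈ Ssol A 0 i) :
    ∑ x ∈ Ssol A b i, agenExt A b i (x + y) = 1 := by
  simp_rw [add_comm _ y]
  rw [← Finset.sum_image fun _ _ _ _ h => add_left_cancel h, image_add_left_Ssol hy, zero_add,
    sum_agenExt]

instance : StarModule ℂ (GameAlg A b) where
  star_smul c a := by
    obtain ⟨a, rfl⟩ := RingQuot.mkAlgHom_surjective ℂ _ a
    rw [← map_smul, GameAlg.star_mkAlgHom, GameAlg.star_mkAlgHom, star_smul, map_smul]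

end GameAlgebraGenerators

section IsoToSync

variable {p m n : ℕ} [NeZero p] (A : Matrix (Fin m) (Fin n) (ZMod p)) (b : Fin m → ZMod p)

def addGen (u : SyncGen A b) (o : SyncGen A 0) : GameAlg A b :=
  if u.1 = o.1 then agenExt A b u.1 (u.2.1 + o.2.1) else 0

def isoGenImage :
    (SyncGen A b ⊕ SyncGen A 0) × (SyncGen A b ⊕ SyncGen A 0) → GameAlg A b
  | (.inl u, .inr o) => addGen A b u o
  | (.inr o, .inl u) => addGen A b u o
  | _ => 0

variable {A b}

lemma isSelfAdjoint_addGen (u : SyncGen A b) (o : SyncGen A 0) :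
    IsSelfAdjoint (addGen A b u o) := by
  unfold addGen
  split_ifs
  exacts [isSelfAdjoint_agenExt _ _, .zero _]

lemma addGen_mul_self (u : SyncGen A b) (o : SyncGen A 0) :
    addGen A b u o * addGen A b u o = addGen A b u o := by
  unfold addGen
  split_ifs
  exacts [agenExt_mul_self _ _, mul_zero 0]

lemma sum_addGen_left (u : SyncGen A b) : ∑ o, addGen A b u o = 1 := by
  obtain ⟨i, x, hx⟩ := u
  rw [Fintype.sum_sigma, Finset.sum_eq_single i, ← sum_agenExt_add_left hx]
  · simp [addGen, Finset.sum_attach (Ssol A 0 i) fun y => agenExt A b i (x + y)]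
  · intro k _ hk
    simp [addGen, Ne.symm hk]
  · simp

lemma sum_addGen_right (o : SyncGen A 0) : ∑ u, addGen A b u o = 1 := by
  obtain ⟨i, y, hy⟩ := o
  rw [Fintype.sum_sigma, Finset.sum_eq_single i, ← sum_agenExt_add_right hy]
  · simp [addGen, Finset.sum_attach (Ssol A b i) fun x => agenExt A b i (x + y)]
  · intro k _ hk
    simp [addGen, hk]
  · simp

lemma addGen_mul_addGen_eq_zero {u u' : SyncGen A b} {o o' : SyncGen A 0}
    (h : ¬ ((u = u' ↔ o = o') ∧ ((lsGraph A b).Adj u u' ↔ (lsGraph A 0).Adj o o'))) :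
    addGen A b u o * addGen A b u' o' = 0 := by
  obtain ⟨i, x, hx⟩ := u
  obtain ⟨k, y, hy⟩ := u'
  obtain ⟨i', x', hx'⟩ := o
  obtain ⟨k', y', hy'⟩ := o'
  unfold addGen
  split_ifs with ho ho'
  · subst ho ho'
    refine agenExt_mul_agenExt_of_incompat (by_contra fun hc => h ?_)
    have hadj := Incompat.iff_of_not_incompat_add hc
    refine ⟨?_, hadj⟩
    rw [SyncGen.eq_iff, SyncGen.eq_iff]
    exact and_congr_right' (not_congr hadj)
  all_goals simp

lemma isSelfAdjoint_isoGenImage (g) : IsSelfAdjoint (isoGenImage A b g) := by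
  rcases g with ⟨u | o, u' | o'⟩ <;> simp [isoGenImage, isSelfAdjoint_addGen]

lemma isoGenImage_mul_self (g) : isoGenImage A b g * isoGenImage A b g = isoGenImage A b g := by
  rcases g with ⟨u | o, u' | o'⟩ <;> simp [isoGenImage, addGen_mul_self]

lemma sum_isoGenImage (v) : ∑ x, isoGenImage A b (v, x) = 1 := by
  rcases v with u | o <;> simp [isoGenImage, sum_addGen_left, sum_addGen_right]

lemma isoGenImage_mul_eq_zero {v w x y} (h : ¬ IsoWin (lsGraph A b) (lsGraph A 0) v w x y) :
    isoGenImage A b (v, x) * isoGenImage A b (w, y) = 0 := by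
  rcases v with v | v <;> rcases w with w | w <;> rcases x with x | x <;> rcases y with y | y <;>
    simp only [isoGenImage, zero_mul, mul_zero] <;> simp only [IsoWin, not_true] at h
  case inl.inl.inr.inr => exact addGen_mul_addGen_eq_zero h
  case inr.inr.inl.inl => exact addGen_mul_addGen_eq_zero fun h' => h ⟨h'.1.symm, h'.2.symm⟩

end IsoToSync

/-- There is a unital `*`-homomorphism
`φ : 𝒜(Iso(G_{A,b},G_{A,0})) → 𝒜(syncLCS(A,b))` sending the generator with input `(i,x)`
and output `(j,y)` (equivalently input `(j,y)` and output `(i,x)`) to `δ_{ij}·a_{i,x+y}`,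
and all generators whose input and output lie in the same graph to `0`. -/
theorem statement18 (p : ℕ) [Fact p.Prime] {m n : ℕ} (A : Matrix (Fin m) (Fin n) (ZMod p))
    (b : Fin m → ZMod p) :
    ∃ φ : IsoAlg (lsGraph A b) (lsGraph A (0 : Fin m → ZMod p)) →⋆ₐ[ℂ] GameAlg A b,
      (∀ (i : Fin m) (x y : Fin n → ZMod p) (hx : x ∈ Ssol A b i)
          (hy : y ∈ Ssol A (0 : Fin m → ZMod p) i) (hxy : x + y ∈ Ssol A b i),
        φ (egen (lsGraph A b) (lsGraph A (0 : Fin m → ZMod p))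
            (Sum.inl ⟨i, ⟨x, hx⟩⟩) (Sum.inr ⟨i, ⟨y, hy⟩⟩)) = agen A b i (x + y) hxy ∧
        φ (egen (lsGraph A b) (lsGraph A (0 : Fin m → ZMod p))
            (Sum.inr ⟨i, ⟨y, hy⟩⟩) (Sum.inl ⟨i, ⟨x, hx⟩⟩)) = agen A b i (x + y) hxy) ∧
      (∀ (i j : Fin m), i ≠ j → ∀ (x : Fin n → ZMod p) (hx : x ∈ Ssol A b i)
          (y : Fin n → ZMod p) (hy : y ∈ Ssol A (0 : Fin m → ZMod p) j),
        φ (egen (lsGraph A b) (lsGraph A (0 : Fin m → ZMod p))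
            (Sum.inl ⟨i, ⟨x, hx⟩⟩) (Sum.inr ⟨j, ⟨y, hy⟩⟩)) = 0 ∧
        φ (egen (lsGraph A b) (lsGraph A (0 : Fin m → ZMod p))
            (Sum.inr ⟨j, ⟨y, hy⟩⟩) (Sum.inl ⟨i, ⟨x, hx⟩⟩)) = 0) ∧
      (∀ v w : SyncGen A b,
        φ (egen (lsGraph A b) (lsGraph A (0 : Fin m → ZMod p))
            (Sum.inl v) (Sum.inl w)) = 0) ∧
      (∀ v w : SyncGen A (0 : Fin m → ZMod p),
        φ (egen (lsGraph A b) (lsGraph A (0 : Fin m → ZMod p))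
            (Sum.inr v) (Sum.inr w)) = 0) := by
  refine ⟨IsoAlg.lift (isoGenImage A b) isSelfAdjoint_isoGenImage isoGenImage_mul_self
    sum_isoGenImage isoGenImage_mul_eq_zero, fun i x y hx hy hxy => ?_,
    fun i j hij x hx y hy => ?_, fun v w => ?_, fun v w => ?_⟩
  · simp [IsoAlg.lift_egen, isoGenImage, addGen, agenExt_of_mem hxy]
  · simp [IsoAlg.lift_egen, isoGenImage, addGen, hij]
  · simp [IsoAlg.lift_egen, isoGenImage]
  · simp [IsoAlg.lift_egen, isoGenImage]

end
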